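/- Let Φ be a minimal unsatisfiable 2CNF formula and x a variable of Φ. If (F_x, F_{¬x}) is a splitting of Φ over x, then both splitting formulas F_x and F_{¬x} are in MU(1). -/

import Mathlib

/-! Basic definitions: literals, clauses, CNF formulas. -/

/-- A literal is a variable together with a polarity. -/
abbrev Lit (V : Type) : Type := V × Bool

/-- Negation of a literal. -/
def Lit.neg {V : Type} (l : Lit V) : Lit V := (l.1, !l.2)

/-- A clause is a finite set of literals (a disjunction). -/
abbrev Clause (V : Type) : Type := Finset (Lit V)

/-- A CNF formula is a finite set of clauses (a conjunction). -/
abbrev CNF (V : Type) : Type := Finset (Clause V)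

section BasicDefs

variable {V : Type} [DecidableEq V]

/-- A literal holds under a Boolean assignment. -/
def Lit.holds (a : V → Bool) (l : Lit V) : Prop := a l.1 = l.2

/-- A clause holds under an assignment if some literal in it holds. -/
def Clause.holds (a : V → Bool) (C : Clause V) : Prop := ∃ l ∈ C, Lit.holds a l

/-- A CNF formula is satisfiable. -/
def CNF.sat (Φ : CNF V) : Prop := ∃ a : V → Bool, ∀ C ∈ Φ, Clause.holds a C

/-- A CNF formula is unsatisfiable. -/
def CNF.unsat (Φ : CNF V) : Prop := ¬ CNF.sat Φ

/-- A CNF formula is minimal unsatisfiable: it is unsatisfiable and every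
proper subformula is satisfiable. -/
def CNF.minUnsat (Φ : CNF V) : Prop :=
  CNF.unsat Φ ∧ ∀ Ψ : CNF V, Ψ ⊂ Φ → CNF.sat Ψ

/-- The set of variables occurring in a formula. -/
def CNF.vars (Φ : CNF V) : Finset V := Φ.biUnion (fun C => C.image Prod.fst)

/-- The deficiency of a formula: number of clauses minus number of variables. -/
def CNF.deficiency (Φ : CNF V) : ℤ := (Φ.card : ℤ) - ((CNF.vars Φ).card : ℤ)

/-- MU(1): minimal unsatisfiable with deficiency 1. -/
def CNF.MU1 (Φ : CNF V) : Prop := CNF.minUnsat Φ ∧ CNF.deficiency Φ = 1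

/-- A 2CNF formula: every clause has at most 2 literals. -/
def CNF.is2CNF (Φ : CNF V) : Prop := ∀ C ∈ Φ, C.card ≤ 2

/-- `R` is the resolvent of `C1` and `C2` upon the matching variable `x`. -/
def IsResolvent (C1 C2 R : Clause V) (x : V) : Prop :=
  (x, true) ∈ C1 ∧ (x, false) ∈ C2 ∧
    R = (C1.erase (x, true)) ∪ (C2.erase (x, false))

/-- One step of read-once resolution on a multiset of clauses: the two parent
clauses are removed from the current multiset and the resolvent is added. -/
def RORStep (S T : Multiset (Clause V)) : Prop :=
  ∃ (C1 C2 R : Clause V) (x : V),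
    C1 ∈ S ∧ C2 ∈ S.erase C1 ∧ IsResolvent C1 C2 R x ∧
    T = R ::ₘ ((S.erase C1).erase C2)

/-- Read-once derivability of the clause `π` from the multiset of clauses `S`. -/
def RORDeriv (S : Multiset (Clause V)) (π : Clause V) : Prop :=
  ∃ T : Multiset (Clause V), Relation.ReflTransGen RORStep S T ∧ π ∈ T

/-- The formula `Φ` has a read-once resolution refutation. -/
def CNF.hasROR (Φ : CNF V) : Prop := RORDeriv (Φ.val) (∅ : Clause V)

end BasicDefs

/-- A resolution step: two parent clauses, a matching variable and a resolvent. -/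
structure RStep (V : Type) where
  c1 : Clause V
  c2 : Clause V
  mv : V
  res : Clause V

section MoreDefs

variable {V : Type} [DecidableEq V]

/-- Validity of a resolution step. -/
def RStep.valid (s : RStep V) : Prop := IsResolvent s.c1 s.c2 s.res s.mv

/-- A list of resolution steps is a resolution derivation from `Φ`: each step is a
valid resolution step whose parents are clauses of `Φ` or resolvents of earlier steps. -/
def IsResDeriv (Φ : CNF V) (L : List (RStep V)) : Prop :=
  ∀ (i : ℕ) (h : i < L.length),
    RStep.valid (L.get ⟨i, h⟩) ∧
    ((L.get ⟨i, h⟩).c1 ∈ Φ ∨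
      ∃ j, ∃ _ : j < i, (L.get ⟨j, by omega⟩).res = (L.get ⟨i, h⟩).c1) ∧
    ((L.get ⟨i, h⟩).c2 ∈ Φ ∨
      ∃ j, ∃ _ : j < i, (L.get ⟨j, by omega⟩).res = (L.get ⟨i, h⟩).c2)

/-- `Φ` has a Var-ROR refutation: a resolution refutation in which every variable
is used at most once as a matching variable. -/
def CNF.hasVarROR (Φ : CNF V) : Prop :=
  ∃ L : List (RStep V), IsResDeriv Φ L ∧ (L.map RStep.mv).Nodup ∧
    ∃ s ∈ L, s.res = (∅ : Clause V)

/-- `(Fx, Fnx)` is a splitting of `Φ` over the variable `x`: `Fx` consists of all clauses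
of `Φ` containing the literal `x` with that literal removed, together with some clauses of
`Φ` not containing `x` nor `¬x` (and symmetrically for `Fnx` with `¬x`), and both `Fx` and
`Fnx` are minimal unsatisfiable. -/
def IsSplitting (Φ : CNF V) (x : V) (Fx Fnx : CNF V) : Prop :=
  ∃ S1 S2 : CNF V,
    S1 ⊆ Φ ∧ S2 ⊆ Φ ∧
    (∀ C ∈ S1, (x, true) ∉ C ∧ (x, false) ∉ C) ∧
    (∀ C ∈ S2, (x, true) ∉ C ∧ (x, false) ∉ C) ∧
    Fx = ((Φ.filter (fun C => (x, true) ∈ C)).image (fun C => C.erase (x, true))) ∪ S1 ∧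
    Fnx = ((Φ.filter (fun C => (x, false) ∈ C)).image (fun C => C.erase (x, false))) ∪ S2 ∧
    CNF.minUnsat Fx ∧ CNF.minUnsat Fnx

/-- A disjunctive splitting: a splitting where `Fx` and `Fnx` have no clause `σ_i`
(clause of `Φ` mentioning neither `x` nor `¬x`) in common. -/
def IsDisjSplitting (Φ : CNF V) (x : V) (Fx Fnx : CNF V) : Prop :=
  ∃ S1 S2 : CNF V,
    S1 ⊆ Φ ∧ S2 ⊆ Φ ∧ Disjoint S1 S2 ∧
    (∀ C ∈ S1, (x, true) ∉ C ∧ (x, false) ∉ C) ∧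
    (∀ C ∈ S2, (x, true) ∉ C ∧ (x, false) ∉ C) ∧
    Fx = ((Φ.filter (fun C => (x, true) ∈ C)).image (fun C => C.erase (x, true))) ∪ S1 ∧
    Fnx = ((Φ.filter (fun C => (x, false) ∈ C)).image (fun C => C.erase (x, false))) ∪ S2 ∧
    CNF.minUnsat Fx ∧ CNF.minUnsat Fnx

end MoreDefs

/-! The proof rests on unit propagation. In a minimal unsatisfiable formula `Ψ` with a unit
clause `{l}`, no other clause contains `l`, and deleting `{l}` and removing `¬l` from the
remaining clauses gives again a minimal unsatisfiable formula with one clause and one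
variable fewer, so the deficiency is unchanged. For a 2CNF formula some clause contained
`¬l` and has become a clause with at most one literal, so the propagation can be repeated
until the empty clause appears, and `{∅}` has deficiency `1`. In a splitting over `x`,
the clauses `π_i` come from 2-clauses `x ∨ π_i` of `Φ`, so `F_x` and `F_¬x` contain such a
short clause; such `π_i` exist because `x` occurs in `Φ` with both signs. -/

section Basic

variable {V : Type}

lemma Lit.eq_or_eq_neg_of_fst_eq {m l : Lit V} (h : m.1 = l.1) : m = l ∨ m = l.neg := by
  rcases Bool.eq_or_eq_not m.2 l.2 with h2 | h2
  · exact Or.inl (Prod.ext h h2)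
  · exact Or.inr (Prod.ext h h2)

lemma Lit.neg_ne_self (l : Lit V) : l.neg ≠ l := fun h => by
  simpa [Lit.neg] using congrArg Prod.snd h

lemma Clause.fst_ne_of_notMem {E : Clause V} {l : Lit V} (hl : l ∉ E) (hl' : l.neg ∉ E) :
    ∀ m ∈ E, m.1 ≠ l.1 := by
  intro m hm h
  rcases Lit.eq_or_eq_neg_of_fst_eq h with rfl | rfl <;> contradiction

lemma Lit.not_holds_neg {a : V → Bool} {l : Lit V} (h : Lit.holds a l) :
    ¬ Lit.holds a l.neg := by
  simp_all [Lit.holds, Lit.neg]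

lemma Clause.holds.mono {a : V → Bool} {E E' : Clause V} (h : Clause.holds a E)
    (hE : E ⊆ E') : Clause.holds a E' :=
  let ⟨m, hm, hma⟩ := h
  ⟨m, hE hm, hma⟩

variable [DecidableEq V]

lemma Clause.holds.update {a : V → Bool} {E : Clause V} {v : V} (b : Bool)
    (h : Clause.holds a E) (hv : ∀ m ∈ E, m.1 ≠ v) :
    Clause.holds (Function.update a v b) E := by
  obtain ⟨m, hm, hma⟩ := h
  exact ⟨m, hm, by rwa [Lit.holds, Function.update_of_ne (hv m hm)]⟩

lemma Clause.holds_update_self (a : V → Bool) (l : Lit V) :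
    Clause.holds (Function.update a l.1 l.2) {l} :=
  ⟨l, Finset.mem_singleton_self l, by simp [Lit.holds]⟩

lemma CNF.mem_vars {Ψ : CNF V} {v : V} : v ∈ Ψ.vars ↔ ∃ C ∈ Ψ, ∃ b, (v, b) ∈ C := by
  simp only [CNF.vars, Finset.mem_biUnion, Finset.mem_image, Prod.exists]
  constructor
  · rintro ⟨C, hC, _, b, hb, rfl⟩
    exact ⟨C, hC, b, hb⟩
  · rintro ⟨C, hC, b, hb⟩
    exact ⟨C, hC, v, b, hb, rfl⟩

namespace CNF.minUnsat

variable {Ψ : CNF V}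

lemma eq_of_subset (hmu : Ψ.minUnsat) {D D' : Clause V} (hD : D ∈ Ψ) (hD' : D' ∈ Ψ)
    (hsub : D ⊆ D') : D = D' := by
  by_contra hne
  obtain ⟨a, ha⟩ := hmu.2 (Ψ.erase D') (Finset.erase_ssubset hD')
  refine hmu.1 ⟨a, fun E hE => ?_⟩
  by_cases hED : E = D'
  · exact hED ▸ (ha D (Finset.mem_erase.mpr ⟨hne, hD⟩)).mono hsub
  · exact ha E (Finset.mem_erase.mpr ⟨hED, hE⟩)

lemma exists_neg_mem (hmu : Ψ.minUnsat) {C : Clause V} {l : Lit V} (hC : C ∈ Ψ)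
    (hl : l ∈ C) : ∃ D ∈ Ψ, l.neg ∈ D := by
  by_contra! hneg
  obtain ⟨a, ha⟩ := hmu.2 (Ψ.filter (l ∉ ·)) (Finset.filter_ssubset.mpr ⟨C, hC, by simpa⟩)
  refine hmu.1 ⟨Function.update a l.1 l.2, fun D hD => ?_⟩
  by_cases hlD : l ∈ D
  · exact (Clause.holds_update_self a l).mono (Finset.singleton_subset_iff.mpr hlD)
  · exact (ha D (Finset.mem_filter.mpr ⟨hD, hlD⟩)).update _
      (Clause.fst_ne_of_notMem hlD (hneg D hD))

lemma exists_mem_of_mem_vars (hmu : Ψ.minUnsat) {x : V} (hx : x ∈ Ψ.vars) (c : Bool) :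
    ∃ C ∈ Ψ, (x, c) ∈ C := by
  obtain ⟨C, hC, b, hb⟩ := CNF.mem_vars.mp hx
  by_cases hbc : b = c
  · exact ⟨C, hC, hbc ▸ hb⟩
  · obtain ⟨D, hD, hnD⟩ := hmu.exists_neg_mem hC hb
    rw [Bool.eq_not.mpr hbc] at hnD
    exact ⟨D, hD, by simpa [Lit.neg] using hnD⟩

lemma eq_singleton_empty (hmu : Ψ.minUnsat) (hempty : ∅ ∈ Ψ) : Ψ = {∅} := by
  by_contra hne
  obtain ⟨a, ha⟩ := hmu.2 {∅} ((Finset.singleton_subset_iff.mpr hempty).ssubset_of_ne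
    (Ne.symm hne))
  obtain ⟨m, hm, -⟩ := ha ∅ (Finset.mem_singleton_self _)
  exact Finset.notMem_empty m hm

end CNF.minUnsat

end Basic

section UnitPropagation

variable {V : Type} [DecidableEq V]

/-- The formula obtained from `Ψ` by setting the literal `l` true, when `{l}` is the only
clause of `Ψ` containing `l`. -/
def CNF.propagateUnit (Ψ : CNF V) (l : Lit V) : CNF V :=
  (Ψ.erase {l}).image (fun D => D.erase l.neg)

variable {Ψ : CNF V} {l : Lit V}

lemma CNF.minUnsat.notMem_of_ne_unit (hmu : Ψ.minUnsat) (hl : {l} ∈ Ψ) {D : Clause V}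
    (hD : D ∈ Ψ.erase {l}) : l ∉ D := fun hlD =>
  Finset.ne_of_mem_erase hD
    (hmu.eq_of_subset hl (Finset.mem_of_mem_erase hD) (Finset.singleton_subset_iff.mpr hlD)).symm

lemma CNF.minUnsat.injOn_erase_neg (hmu : Ψ.minUnsat) :
    Set.InjOn (fun D : Clause V => D.erase l.neg) Ψ := by
  have neg_mem_of_eq : ∀ D ∈ Ψ, ∀ D' ∈ Ψ,
      D.erase l.neg = D'.erase l.neg → l.neg ∈ D' → l.neg ∈ D := by
    intro D hD D' hD' heq hD'l
    by_contra hDl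
    have hsub : D ⊆ D' := by
      rw [← Finset.erase_eq_of_notMem hDl, heq]
      exact Finset.erase_subset _ _
    exact hDl (hmu.eq_of_subset hD hD' hsub ▸ hD'l)
  intro D hD D' hD' (heq : D.erase l.neg = D'.erase l.neg)
  by_cases hDl : l.neg ∈ D
  · rw [← Finset.insert_erase hDl,
      ← Finset.insert_erase (neg_mem_of_eq D' hD' D hD heq.symm hDl)]
    exact congrArg _ heq
  · have hD'l : l.neg ∉ D' := fun h => hDl (neg_mem_of_eq D hD D' hD' heq h)
    rwa [Finset.erase_eq_of_notMem hDl, Finset.erase_eq_of_notMem hD'l] at heq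

lemma CNF.minUnsat.card_propagateUnit (hmu : Ψ.minUnsat) (hl : {l} ∈ Ψ) :
    (Ψ.propagateUnit l).card + 1 = Ψ.card := by
  rw [CNF.propagateUnit, Finset.card_image_of_injOn (hmu.injOn_erase_neg.mono (by simp)),
    Finset.card_erase_add_one hl]

lemma CNF.minUnsat.vars_propagateUnit (hmu : Ψ.minUnsat) (hl : {l} ∈ Ψ) :
    l.1 ∉ (Ψ.propagateUnit l).vars ∧ Ψ.vars = insert l.1 (Ψ.propagateUnit l).vars := by
  constructor
  · rw [CNF.mem_vars]
    rintro ⟨E, hE, b, hb⟩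
    obtain ⟨D, hD, rfl⟩ := Finset.mem_image.mp hE
    generalize hm : (l.1, b) = m at hb
    rcases Lit.eq_or_eq_neg_of_fst_eq (hm ▸ rfl : m.1 = l.1) with rfl | rfl
    · exact hmu.notMem_of_ne_unit hl hD (Finset.mem_of_mem_erase hb)
    · exact Finset.notMem_erase _ _ hb
  ext w
  simp only [Finset.mem_insert, CNF.mem_vars]
  constructor
  · rintro ⟨C, hC, b, hb⟩
    by_cases hw : w = l.1
    · exact Or.inl hw
    have hCl : C ≠ {l} := by
      rintro rfl
      exact hw (congrArg Prod.fst (Finset.mem_singleton.mp hb))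
    have hbl : (w, b) ≠ l.neg := fun h => hw (congrArg Prod.fst h)
    exact Or.inr ⟨C.erase l.neg, Finset.mem_image_of_mem _ (Finset.mem_erase.mpr ⟨hCl, hC⟩),
      b, Finset.mem_erase.mpr ⟨hbl, hb⟩⟩
  · rintro (rfl | ⟨E, hE, b, hb⟩)
    · exact ⟨{l}, hl, l.2, Finset.mem_singleton_self l⟩
    obtain ⟨D, hD, rfl⟩ := Finset.mem_image.mp hE
    exact ⟨D, Finset.mem_of_mem_erase hD, b, Finset.mem_of_mem_erase hb⟩

lemma CNF.minUnsat.unsat_propagateUnit (hmu : Ψ.minUnsat) (hl : {l} ∈ Ψ) :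
    (Ψ.propagateUnit l).unsat := by
  rintro ⟨a, ha⟩
  refine hmu.1 ⟨Function.update a l.1 l.2, fun E hE => ?_⟩
  by_cases hEl : E = {l}
  · exact hEl ▸ Clause.holds_update_self a l
  have hER : E ∈ Ψ.erase {l} := Finset.mem_erase.mpr ⟨hEl, hE⟩
  have hlE : l ∉ E.erase l.neg := fun h =>
    hmu.notMem_of_ne_unit hl hER (Finset.mem_of_mem_erase h)
  exact ((ha _ (Finset.mem_image_of_mem _ hER)).update _
    (Clause.fst_ne_of_notMem hlE (Finset.notMem_erase _ _))).mono (Finset.erase_subset _ _)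

lemma CNF.minUnsat.propagateUnit (hmu : Ψ.minUnsat) (hl : {l} ∈ Ψ) :
    (Ψ.propagateUnit l).minUnsat := by
  refine ⟨hmu.unsat_propagateUnit hl, fun Ψ' hss => ?_⟩
  obtain ⟨E, hE, hEΨ'⟩ := Finset.exists_of_ssubset hss
  obtain ⟨D, hD, rfl⟩ := Finset.mem_image.mp hE
  -- a model of `Ψ` without the parent `D` of the missing clause satisfies `l`, hence `Ψ'`
  obtain ⟨a, ha⟩ := hmu.2 _ (Finset.erase_ssubset (Finset.mem_of_mem_erase hD))
  obtain ⟨m, hm, hal⟩ := ha {l} (Finset.mem_erase.mpr ⟨(Finset.ne_of_mem_erase hD).symm, hl⟩)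
  rw [Finset.mem_singleton.mp hm] at hal
  refine ⟨a, fun E' hE' => ?_⟩
  obtain ⟨D', hD', rfl⟩ := Finset.mem_image.mp (hss.subset hE')
  have hD'D : D' ≠ D := by
    rintro rfl
    exact hEΨ' hE'
  obtain ⟨m', hm', hm'a⟩ := ha D' (Finset.mem_erase.mpr ⟨hD'D, Finset.mem_of_mem_erase hD'⟩)
  refine ⟨m', Finset.mem_erase.mpr ⟨?_, hm'⟩, hm'a⟩
  rintro rfl
  exact Lit.not_holds_neg hal hm'a

lemma CNF.minUnsat.deficiency_propagateUnit (hmu : Ψ.minUnsat) (hl : {l} ∈ Ψ) :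
    (Ψ.propagateUnit l).deficiency = Ψ.deficiency := by
  obtain ⟨hnotMem, hvars⟩ := hmu.vars_propagateUnit hl
  have hcard := hmu.card_propagateUnit hl
  rw [CNF.deficiency, CNF.deficiency, hvars, Finset.card_insert_of_notMem hnotMem]
  omega

lemma CNF.is2CNF.propagateUnit (h2 : Ψ.is2CNF) : (Ψ.propagateUnit l).is2CNF := by
  intro E hE
  obtain ⟨D, hD, rfl⟩ := Finset.mem_image.mp hE
  exact Finset.card_erase_le.trans (h2 D (Finset.mem_of_mem_erase hD))

end UnitPropagation

section TwoCNF

variable {V : Type} [DecidableEq V]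

theorem CNF.minUnsat.deficiency_eq_one_of_is2CNF {Ψ : CNF V} (hmu : Ψ.minUnsat)
    (h2 : Ψ.is2CNF) {C : Clause V} (hC : C ∈ Ψ) (hC1 : C.card ≤ 1) : Ψ.deficiency = 1 := by
  induction hn : Ψ.card using Nat.strong_induction_on generalizing Ψ C with
  | _ n ih =>
  rcases Nat.le_one_iff_eq_zero_or_eq_one.mp hC1 with hC0 | hC1
  · rw [hmu.eq_singleton_empty (Finset.card_eq_zero.mp hC0 ▸ hC)]
    simp [CNF.deficiency, CNF.vars]
  obtain ⟨l, rfl⟩ := Finset.card_eq_one.mp hC1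
  -- the clause containing `¬l` loses that literal and becomes the next short clause
  obtain ⟨D, hD, hlD⟩ := hmu.exists_neg_mem hC (Finset.mem_singleton_self l)
  have hDl : D ≠ {l} := by
    rintro rfl
    exact Lit.neg_ne_self l (Finset.mem_singleton.mp hlD)
  have hcard := hmu.card_propagateUnit hC
  rw [← hmu.deficiency_propagateUnit hC]
  refine ih _ (by omega) (hmu.propagateUnit hC) h2.propagateUnit
    (Finset.mem_image_of_mem _ (Finset.mem_erase.mpr ⟨hDl, hD⟩)) ?_ rfl
  have := h2 D hD
  rw [Finset.card_erase_of_mem hlD]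
  omega

lemma CNF.is2CNF.MU1_of_minUnsat_erase_union {Φ S : CNF V} (h2 : Φ.is2CNF) (hS : S ⊆ Φ)
    {l : Lit V} (hl : ∃ C ∈ Φ, l ∈ C)
    (hmu : CNF.minUnsat ((Φ.filter (l ∈ ·)).image (·.erase l) ∪ S)) :
    CNF.MU1 ((Φ.filter (l ∈ ·)).image (·.erase l) ∪ S) := by
  obtain ⟨C, hC, hlC⟩ := hl
  refine ⟨hmu, hmu.deficiency_eq_one_of_is2CNF ?_
    (Finset.mem_union_left _ (Finset.mem_image_of_mem _ (Finset.mem_filter.mpr ⟨hC, hlC⟩))) ?_⟩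
  · intro E hE
    rcases Finset.mem_union.mp hE with hE | hE
    · obtain ⟨D, hD, rfl⟩ := Finset.mem_image.mp hE
      exact Finset.card_erase_le.trans (h2 D (Finset.mem_filter.mp hD).1)
    · exact h2 E (hS hE)
  · have := h2 C hC
    rw [Finset.card_erase_of_mem hlC]
    omega

end TwoCNF

/-- If `(Fx, Fnx)` is a splitting of a minimal unsatisfiable 2CNF
formula `Φ` over a variable `x` of `Φ`, then both splitting formulas are in MU(1). -/
theorem stmt1 {V : Type} [DecidableEq V] (Φ : CNF V)
    (h2 : CNF.is2CNF Φ) (hmu : CNF.minUnsat Φ)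
    (x : V) (hx : x ∈ CNF.vars Φ) (Fx Fnx : CNF V)
    (hsplit : IsSplitting Φ x Fx Fnx) :
    CNF.MU1 Fx ∧ CNF.MU1 Fnx := by
  obtain ⟨S1, S2, hS1, hS2, -, -, rfl, rfl, hmux, hmunx⟩ := hsplit
  exact ⟨h2.MU1_of_minUnsat_erase_union hS1 (hmu.exists_mem_of_mem_vars hx true) hmux,
    h2.MU1_of_minUnsat_erase_union hS2 (hmu.exists_mem_of_mem_vars hx false) hmunx⟩
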